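/- Let J be an ideal in the ring of germs of smooth (real-valued) functions at a point x0, and define the real radical of J to be the set of germs g such that there exist f ∈ J and a positive integer m with |g|^m ≤ |f| on some neighborhood of x0. Then the real radical of J is an ideal containing J, and it is closed under taking real radicals again (i.e., the real radical of the real radical of J equals the real radical of J). -/

import Mathlib

open Filter

variable {n : ℕ}

/-- The subring of germs at `x0` of smooth real-valued functions on `ℝⁿ`:
germs (with respect to eventual equality near `x0`) that admit a smooth representative. -/
noncomputable def SmoothGermRing (x0 : EuclideanSpace ℝ (Fin n)) :
    Subring ((nhds x0).Germ ℝ) where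
  carrier := {g | ∃ f : EuclideanSpace ℝ (Fin n) → ℝ, ContDiff ℝ (⊤ : ℕ∞) f ∧ (f : (nhds x0).Germ ℝ) = g}
  zero_mem' := ⟨0, contDiff_const, rfl⟩
  one_mem' := ⟨1, contDiff_const, rfl⟩
  add_mem' := by
    rintro a b ⟨f, hf, rfl⟩ ⟨g, hg, rfl⟩
    exact ⟨f + g, hf.add hg, rfl⟩
  mul_mem' := by
    rintro a b ⟨f, hf, rfl⟩ ⟨g, hg, rfl⟩
    exact ⟨f * g, hf.mul hg, rfl⟩
  neg_mem' := by
    rintro a ⟨f, hf, rfl⟩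
    exact ⟨-f, hf.neg, rfl⟩

/-- The real radical of a set `J` of smooth germs at `x0`: the set of smooth germs `g`
such that `|g|^m ≤ |f|` near `x0` for some `f ∈ J` and some positive integer `m`.
(The inequality of germs is the "eventually on a neighborhood" inequality.) -/
def realRadical (x0 : EuclideanSpace ℝ (Fin n)) (J : Set (SmoothGermRing x0)) :
    Set (SmoothGermRing x0) :=
  {g | ∃ f ∈ J, ∃ m : ℕ, 0 < m ∧
    |(g : (nhds x0).Germ ℝ)| ^ m ≤ |(f : (nhds x0).Germ ℝ)|}

lemma realKey (A B F F' M : ℝ) (hM : 1 ≤ M) (hA : |A| ≤ M) (hB : |B| ≤ M)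
    (m p : ℕ) (h1 : |A|^m ≤ |F|) (h2 : |B|^p ≤ |F'|) :
    |A + B| ^ (2*m + 2*p) ≤ 2^(2*m+2*p) * M^(2*m+2*p) * (F*F + F'*F') := by
  set N := 2*m+2*p with hN
  have h0 : (0:ℝ) ≤ M := by linarith
  have hAN : |A|^N ≤ (F*F) * M^N := by
    have e : |A|^N = (|A|^m)^2 * |A|^(2*p) := by
      rw [hN, ← pow_mul, ← pow_add]; ring_nf
    rw [e]
    have e1 : (|A|^m)^2 ≤ F*F := by
      calc (|A|^m)^2 ≤ |F|^2 := pow_le_pow_left₀ (pow_nonneg (abs_nonneg A) m) h1 2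
        _ = F*F := by rw [sq_abs]; ring
    have e2 : |A|^(2*p) ≤ M^N := by
      calc |A|^(2*p) ≤ M^(2*p) := pow_le_pow_left₀ (abs_nonneg A) hA _
        _ ≤ M^N := pow_le_pow_right₀ hM (by omega)
    exact mul_le_mul e1 e2 (pow_nonneg (abs_nonneg A) _) (by nlinarith [sq_nonneg F])
  have hBN : |B|^N ≤ (F'*F') * M^N := by
    have e : |B|^N = (|B|^p)^2 * |B|^(2*m) := by
      rw [hN, ← pow_mul, ← pow_add]; ring_nf
    rw [e]
    have e1 : (|B|^p)^2 ≤ F'*F' := by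
      calc (|B|^p)^2 ≤ |F'|^2 := pow_le_pow_left₀ (pow_nonneg (abs_nonneg B) p) h2 2
        _ = F'*F' := by rw [sq_abs]; ring
    have e2 : |B|^(2*m) ≤ M^N := by
      calc |B|^(2*m) ≤ M^(2*m) := pow_le_pow_left₀ (abs_nonneg B) hB _
        _ ≤ M^N := pow_le_pow_right₀ hM (by omega)
    exact mul_le_mul e1 e2 (pow_nonneg (abs_nonneg B) _) (by nlinarith [sq_nonneg F'])
  calc |A + B|^N ≤ (|A| + |B|)^N := pow_le_pow_left₀ (abs_nonneg _) (abs_add_le A B) N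
    _ ≤ (2 * max |A| |B|)^N := by
        refine pow_le_pow_left₀ (by positivity) ?_ N
        rcases le_total |A| |B| with h | h
        · rw [max_eq_right h]; linarith
        · rw [max_eq_left h]; linarith
    _ = 2^N * (max |A| |B|)^N := mul_pow _ _ _
    _ ≤ 2^N * (|A|^N + |B|^N) := by
        refine mul_le_mul_of_nonneg_left ?_ (by positivity)
        rcases max_cases |A| |B| with ⟨h, _⟩ | ⟨h, _⟩ <;> rw [h]
        · nlinarith [pow_nonneg (abs_nonneg B) N]
        · nlinarith [pow_nonneg (abs_nonneg A) N]
    _ ≤ 2^N * ((F*F)*M^N + (F'*F')*M^N) :=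
        mul_le_mul_of_nonneg_left (add_le_add hAN hBN) (by positivity)
    _ = 2^N * M^N * (F*F + F'*F') := by ring

/-- a smooth representative together with a bound -/
lemma exists_rep_bound (x0 : EuclideanSpace ℝ (Fin n)) (g : SmoothGermRing x0) :
    ∃ fg : EuclideanSpace ℝ (Fin n) → ℝ,
      (fg : (nhds x0).Germ ℝ) = (g : (nhds x0).Germ ℝ) ∧
      ∃ M : ℝ, 1 ≤ M ∧ ∀ᶠ x in nhds x0, |fg x| ≤ M := by
  obtain ⟨fg, hfg, hco⟩ := g.2
  refine ⟨fg, hco, |fg x0| + 1, by linarith [abs_nonneg (fg x0)], ?_⟩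
  have hc : ContinuousAt fg x0 := hfg.continuous.continuousAt
  have h1 : ∀ᶠ x in nhds x0, dist (fg x) (fg x0) < 1 :=
    (Metric.tendsto_nhds.mp hc) 1 one_pos
  filter_upwards [h1] with x hx
  rw [Real.dist_eq] at hx
  calc |fg x| = |(fg x - fg x0) + fg x0| := by ring_nf
    _ ≤ |fg x - fg x0| + |fg x0| := abs_add_le _ _
    _ ≤ |fg x0| + 1 := by linarith

/-- constant element of the smooth germ ring -/
noncomputable def cst (x0 : EuclideanSpace ℝ (Fin n)) (c : ℝ) : SmoothGermRing x0 :=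
  ⟨((fun _ => c : EuclideanSpace ℝ (Fin n) → ℝ) : (nhds x0).Germ ℝ),
    ⟨fun _ => c, contDiff_const, rfl⟩⟩

lemma germ_abspow_le_abspow {α : Type*} {l : Filter α} (f g : α → ℝ) (m k : ℕ) :
    |(f : Germ l ℝ)| ^ m ≤ |(g : Germ l ℝ)| ^ k ↔ ∀ᶠ x in l, |f x| ^ m ≤ |g x| ^ k :=
  Germ.coe_le

lemma germ_abspow_le_abs {α : Type*} {l : Filter α} (f g : α → ℝ) (m : ℕ) :
    |(f : Germ l ℝ)| ^ m ≤ |(g : Germ l ℝ)| ↔ ∀ᶠ x in l, |f x| ^ m ≤ |g x| :=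
  Germ.coe_le

/-- The real radical of an ideal `J` of the ring of smooth germs at `x0` is an ideal
containing `J`, and taking the real radical is idempotent. -/
theorem stmt1 (x0 : EuclideanSpace ℝ (Fin n)) (J : Ideal (SmoothGermRing x0)) :
    ∃ I : Ideal (SmoothGermRing x0),
      (I : Set (SmoothGermRing x0)) = realRadical x0 (J : Set (SmoothGermRing x0)) ∧
      (J : Set (SmoothGermRing x0)) ⊆ realRadical x0 (J : Set (SmoothGermRing x0)) ∧
      realRadical x0 (realRadical x0 (J : Set (SmoothGermRing x0))) =
        realRadical x0 (J : Set (SmoothGermRing x0)) := by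
  refine ⟨⟨⟨⟨realRadical x0 J, ?add⟩, ?zero⟩, ?smul⟩, rfl, ?sub, ?idem⟩
  case zero =>
    exact ⟨0, J.zero_mem, 1, one_pos, by simp⟩
  case add =>
    rintro a b ⟨f, hfJ, m, hm, hle⟩ ⟨f', hf'J, p, hp, hle'⟩
    obtain ⟨fa, hca, Ma, hMa, hba⟩ := exists_rep_bound x0 a
    obtain ⟨fb, hcb, Mb, hMb, hbb⟩ := exists_rep_bound x0 b
    obtain ⟨ff, hcf, -⟩ := exists_rep_bound x0 f
    obtain ⟨ff', hcf', -⟩ := exists_rep_bound x0 f'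
    set M := max Ma Mb with hM
    have hM1 : (1:ℝ) ≤ M := le_trans hMa (le_max_left _ _)
    set N := 2*m + 2*p with hNdef
    set C : ℝ := 2^N * M^N with hC
    refine ⟨cst x0 C * (f*f + f'*f'), J.mul_mem_left _
      (J.add_mem (J.mul_mem_left f hfJ) (J.mul_mem_left f' hf'J)), N, by omega, ?_⟩
    -- rewrite everything as coe of functions
    have ea : ((a + b : SmoothGermRing x0) : (nhds x0).Germ ℝ)
        = ((fun x => fa x + fb x : _) : (nhds x0).Germ ℝ) := by
      push_cast
      rw [← hca, ← hcb]; rfl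
    have eh : ((cst x0 C * (f*f + f'*f') : SmoothGermRing x0) : (nhds x0).Germ ℝ)
        = ((fun x => C * (ff x * ff x + ff' x * ff' x) : _) : (nhds x0).Germ ℝ) := by
      push_cast
      rw [← hcf, ← hcf']; rfl
    rw [ea, eh, germ_abspow_le_abs]
    rw [← hca, ← hcf] at hle
    rw [← hcb, ← hcf'] at hle'
    rw [germ_abspow_le_abs] at hle hle'
    filter_upwards [hle, hle', hba, hbb] with x h1 h2 h3 h4
    have key := realKey (fa x) (fb x) (ff x) (ff' x) M hM1
      (le_trans h3 (le_max_left _ _)) (le_trans h4 (le_max_right _ _)) m p h1 h2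
    calc |fa x + fb x| ^ N ≤ C * (ff x * ff x + ff' x * ff' x) := by
          rw [hC]; exact key
      _ ≤ |C * (ff x * ff x + ff' x * ff' x)| := le_abs_self _
  case smul =>
    rintro r g ⟨f, hfJ, m, hm, hle⟩
    obtain ⟨fr, hcr, M, hM, hbr⟩ := exists_rep_bound x0 r
    obtain ⟨fg, hcg, -⟩ := exists_rep_bound x0 g
    obtain ⟨ff, hcf, -⟩ := exists_rep_bound x0 f
    refine ⟨cst x0 (M^m) * f, J.mul_mem_left _ hfJ, m, hm, ?_⟩
    have er : ((r • g : SmoothGermRing x0) : (nhds x0).Germ ℝ)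
        = ((fun x => fr x * fg x : _) : (nhds x0).Germ ℝ) := by
      rw [smul_eq_mul]
      push_cast
      rw [← hcr, ← hcg]; rfl
    have eh : ((cst x0 (M^m) * f : SmoothGermRing x0) : (nhds x0).Germ ℝ)
        = ((fun x => M^m * ff x : _) : (nhds x0).Germ ℝ) := by
      push_cast
      rw [← hcf]; rfl
    rw [er, eh, germ_abspow_le_abs]
    rw [← hcg, ← hcf, germ_abspow_le_abs] at hle
    filter_upwards [hle, hbr] with x h1 h2
    have hM0 : (0:ℝ) ≤ M := by linarith
    calc |fr x * fg x| ^ m = |fr x|^m * |fg x|^m := by rw [abs_mul, mul_pow]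
      _ ≤ M^m * |ff x| := mul_le_mul (pow_le_pow_left₀ (abs_nonneg _) h2 m) h1
          (pow_nonneg (abs_nonneg _) m) (pow_nonneg hM0 m)
      _ ≤ |M^m * ff x| := by rw [abs_mul, abs_of_nonneg (pow_nonneg hM0 m)]
  case sub =>
    exact fun g hg => ⟨g, hg, 1, one_pos, le_of_eq (pow_one _)⟩
  case idem =>
    apply Set.Subset.antisymm
    · rintro g ⟨f, ⟨h, hhJ, k, hk, hfh⟩, m, hm, hgf⟩
      refine ⟨h, hhJ, m * k, Nat.mul_pos hm hk, ?_⟩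
      obtain ⟨fg, hcg, -⟩ := exists_rep_bound x0 g
      obtain ⟨ff, hcf, -⟩ := exists_rep_bound x0 f
      obtain ⟨fh, hch, -⟩ := exists_rep_bound x0 h
      rw [← hcg, ← hch, germ_abspow_le_abs]
      rw [← hcg, ← hcf, germ_abspow_le_abs] at hgf
      rw [← hcf, ← hch, germ_abspow_le_abs] at hfh
      filter_upwards [hgf, hfh] with x h1 h2
      calc |fg x| ^ (m*k) = (|fg x|^m)^k := by rw [pow_mul]
        _ ≤ |ff x|^k := pow_le_pow_left₀ (pow_nonneg (abs_nonneg _) m) h1 k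
        _ ≤ |fh x| := h2
    · exact fun g hg => ⟨g, hg, 1, one_pos, le_of_eq (pow_one _)⟩
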